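/- (Entropy form of the Law of Requisite Variety.) Let X : Ω → D and U : Ω → R be random variables on a probability space (Ω, P) taking values in finite nonempty types D and R, and let g : D → R → O map into a finite type O with x ↦ g x u injective for every u : R. Then the output Y = (ω ↦ g (X ω) (U ω)) satisfies H(Y) ≥ H(X) − Real.log (Nat.card R): a regulator with only Nat.card R distinguishable responses can reduce the disturbance entropy by at most log (Nat.card R). -/

import Mathlib

/-!
Injectivity of `x ↦ g x u` means that the pair `(Y, U)` carries exactly the information of
`(X, U)`, so `H(X) ≤ H(X, U) = H(Y, U)`. Conditioning on `Y`, the pair `(Y, U)` spreads each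
value of `Y` over at most `|R|` values, so by concavity of `x ↦ -x log x` (Jensen with uniform
weights) `H(Y, U) ≤ H(Y) + log |R|`.
-/

open MeasureTheory

/-- Shannon entropy `H(X)` of a finitely-valued random variable `X` under `P`. -/
noncomputable def entropy {Ω S : Type*} [MeasurableSpace Ω] [Fintype S]
    (P : Measure Ω) (X : Ω → S) : ℝ :=
  ∑ s : S, Real.negMulLog (P (X ⁻¹' {s})).toReal

/-- Conditional Shannon entropy `H(X | U)` via the chain rule
`H(X | U) = H(X, U) − H(U)`. -/
noncomputable def condEntropy {Ω S T : Type*} [MeasurableSpace Ω]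
    [Fintype S] [Fintype T] (P : Measure Ω) (X : Ω → S) (U : Ω → T) : ℝ :=
  entropy P (fun ω => (X ω, U ω)) - entropy P U

/-- Mutual information `I(X : U) = H(X) + H(U) − H(X, U)`. -/
noncomputable def mutualInfo {Ω S T : Type*} [MeasurableSpace Ω]
    [Fintype S] [Fintype T] (P : Measure Ω) (X : Ω → S) (U : Ω → T) : ℝ :=
  entropy P X + entropy P U - entropy P (fun ω => (X ω, U ω))

namespace Real

lemma negMulLog_sum_le_sum_negMulLog {ι : Type*} [Fintype ι] (f : ι → ℝ) (hf : ∀ i, 0 ≤ f i) :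
    negMulLog (∑ i, f i) ≤ ∑ i, negMulLog (f i) := by
  calc negMulLog (∑ i, f i) = ∑ i, -f i * log (∑ j, f j) := by
        simp only [negMulLog, ← Finset.sum_mul, Finset.sum_neg_distrib]
    _ ≤ ∑ i, negMulLog (f i) := by
        refine Finset.sum_le_sum fun i _ => ?_
        rcases (hf i).eq_or_lt with h | h
        · simp [← h]
        · exact mul_le_mul_of_nonpos_left
            (log_le_log h (Finset.single_le_sum (fun j _ => hf j) (Finset.mem_univ i)))
            (neg_nonpos.mpr h.le)

lemma sum_negMulLog_le_negMulLog_sum_add_mul_log_card {ι : Type*} [Fintype ι] (p : ι → ℝ)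
    (hp : ∀ i, 0 ≤ p i) :
    ∑ i, negMulLog (p i) ≤ negMulLog (∑ i, p i) + (∑ i, p i) * log (Fintype.card ι) := by
  cases isEmpty_or_nonempty ι
  · simp
  set n : ℝ := (Fintype.card ι : ℝ)
  have hn : 0 < n := by positivity
  have hJensen := concaveOn_negMulLog.le_map_sum (t := Finset.univ) (w := fun _ => n⁻¹)
    (fun _ _ => by positivity) (by simp [n]) (fun i _ => Set.mem_Ici.mpr (hp i))
  simp only [smul_eq_mul, ← Finset.mul_sum, negMulLog_mul] at hJensen
  have hinv : negMulLog n⁻¹ = n⁻¹ * log n := by simp [negMulLog, log_inv]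
  rw [hinv] at hJensen
  have := mul_le_mul_of_nonneg_left hJensen hn.le
  field_simp at this
  linarith

end Real

open Real

section

variable {Ω S T : Type*} [MeasurableSpace Ω] [Fintype T] (P : Measure Ω)

lemma entropy_comp_of_injective [Fintype S] {Z : Ω → S} {φ : S → T} (hφ : Function.Injective φ) :
    entropy P (fun ω => φ (Z ω)) = entropy P Z := by
  refine (Fintype.sum_of_injective φ hφ _ _ (fun t ht => ?_) (fun s => ?_)).symm
  · have : (fun ω => φ (Z ω)) ⁻¹' {t} = ∅ :=
      Set.eq_empty_of_forall_notMem fun ω h => ht ⟨Z ω, h⟩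
    simp [this]
  · have : (fun ω => φ (Z ω)) ⁻¹' {φ s} = Z ⁻¹' {s} := by
      ext ω
      simp [hφ.eq_iff]
    rw [this]

lemma measureReal_preimage_fst_singleton [IsFiniteMeasure P] {Z : Ω → S × T}
    (hZ : ∀ p, MeasurableSet (Z ⁻¹' {p})) (s : S) :
    P.real ((fun ω => (Z ω).1) ⁻¹' {s}) = ∑ t, P.real (Z ⁻¹' {(s, t)}) := by
  have h := sum_measureReal_preimage_singleton (μ := P) ({s} ×ˢ Finset.univ) fun p _ => hZ p
  rw [Finset.sum_product, Finset.sum_singleton] at h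
  rw [h]
  congr 1
  ext ω
  simp [Prod.ext_iff, eq_comm]

variable [Fintype S]

lemma entropy_fst_le_entropy [IsFiniteMeasure P] {Z : Ω → S × T}
    (hZ : ∀ p, MeasurableSet (Z ⁻¹' {p})) :
    entropy P (fun ω => (Z ω).1) ≤ entropy P Z := by
  simp only [entropy, ← measureReal_def, Fintype.sum_prod_type,
    measureReal_preimage_fst_singleton P hZ]
  exact Finset.sum_le_sum fun s _ =>
    negMulLog_sum_le_sum_negMulLog _ fun t => measureReal_nonneg

lemma entropy_le_entropy_fst_add_log_card [IsProbabilityMeasure P] {Z : Ω → S × T}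
    (hZ : ∀ p, MeasurableSet (Z ⁻¹' {p})) :
    entropy P Z ≤ entropy P (fun ω => (Z ω).1) + log (Fintype.card T) := by
  have hsum : ∑ s, ∑ t, P.real (Z ⁻¹' {(s, t)}) = 1 := by
    have h : ∑ p, P.real (Z ⁻¹' {p}) = 1 := by
      rw [sum_measureReal_preimage_singleton _ fun p _ => hZ p]
      simp
    simpa only [Fintype.sum_prod_type] using h
  simp only [entropy, ← measureReal_def, Fintype.sum_prod_type,
    measureReal_preimage_fst_singleton P hZ]
  calc ∑ s, ∑ t, negMulLog (P.real (Z ⁻¹' {(s, t)}))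
      ≤ ∑ s, (negMulLog (∑ t, P.real (Z ⁻¹' {(s, t)})) +
          (∑ t, P.real (Z ⁻¹' {(s, t)})) * log (Fintype.card T)) :=
        Finset.sum_le_sum fun s _ =>
          sum_negMulLog_le_negMulLog_sum_add_mul_log_card _ fun t => measureReal_nonneg
    _ = ∑ s, negMulLog (∑ t, P.real (Z ⁻¹' {(s, t)})) + log (Fintype.card T) := by
        rw [Finset.sum_add_distrib, ← Finset.sum_mul, hsum, one_mul]

end

theorem entropy_output_ge_entropy_sub_log_card_general
    {Ω D R O : Type*} [MeasurableSpace Ω]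
    [Fintype D] [MeasurableSpace D] [MeasurableSingletonClass D]
    [Fintype R] [MeasurableSpace R] [MeasurableSingletonClass R]
    [Fintype O]
    (P : Measure Ω) [IsProbabilityMeasure P]
    (X : Ω → D) (U : Ω → R) (hX : Measurable X) (hU : Measurable U)
    (g : D → R → O) (hg : ∀ u : R, Function.Injective (fun x => g x u)) :
    entropy P (fun ω => g (X ω) (U ω)) ≥
      entropy P X - Real.log (Nat.card R) := by
  have hXU : Measurable fun ω => (X ω, U ω) := hX.prodMk hU
  have hφ : Function.Injective fun p : D × R => (g p.1 p.2, p.2) := by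
    rintro ⟨x, u⟩ ⟨x', u'⟩ h
    simp only [Prod.mk.injEq] at h
    obtain ⟨hx, rfl⟩ := h
    rw [hg u hx]
  have hX_le : entropy P X ≤ entropy P fun ω => (X ω, U ω) :=
    entropy_fst_le_entropy P (Z := fun ω => (X ω, U ω)) fun p => hXU (measurableSet_singleton p)
  have hXU_eq : entropy P (fun ω => (g (X ω) (U ω), U ω)) = entropy P fun ω => (X ω, U ω) :=
    entropy_comp_of_injective P (Z := fun ω => (X ω, U ω)) hφ
  have hYU_le : entropy P (fun ω => (g (X ω) (U ω), U ω)) ≤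
      entropy P (fun ω => g (X ω) (U ω)) + log (Fintype.card R) :=
    entropy_le_entropy_fst_add_log_card P fun q =>
      hXU (Set.toFinite ((fun p : D × R => (g p.1 p.2, p.2)) ⁻¹' {q})).measurableSet
  rw [Nat.card_eq_fintype_card]
  linarith

/-- Entropy form of the Law of Requisite Variety: a regulator with
`Nat.card R` distinguishable responses can reduce the disturbance entropy by
at most `log (Nat.card R)`: `H(Y) ≥ H(X) − log (Nat.card R)`. -/
theorem entropy_output_ge_entropy_sub_log_card
    {Ω D R O : Type*} [MeasurableSpace Ω]
    [Fintype D] [Nonempty D] [MeasurableSpace D] [MeasurableSingletonClass D]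
    [Fintype R] [Nonempty R] [MeasurableSpace R] [MeasurableSingletonClass R]
    [Fintype O]
    (P : Measure Ω) [IsProbabilityMeasure P]
    (X : Ω → D) (U : Ω → R) (hX : Measurable X) (hU : Measurable U)
    (g : D → R → O) (hg : ∀ u : R, Function.Injective (fun x => g x u)) :
    entropy P (fun ω => g (X ω) (U ω)) ≥
      entropy P X - Real.log (Nat.card R) :=
  entropy_output_ge_entropy_sub_log_card_general P X U hX hU g hg
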